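/- arXiv:2104.00470 — 4 statements merged into one kernel-verified Lean document; each statement's English description precedes it below -/
import Mathlib

section
/- Suppose H, ρ : (t₋, T) → ℝ are differentiable with H > 0, ρ > 0, ρ' = −3 H ρ g where g(t) → ξ₁ ≠ 0 as t → t₋, and let a satisfy a' = aH, a > 0. If moreover g is bounded between positive constants on (t₋, T) and ρ(t) → ∞ as t → t₋, then a(t) → 0 as t → t₋; more precisely, for every ε > 0 there is T' such that a(t) ≤ C (1/ρ(t))^{1/(3(ξ₁+ε))} on (t₋, T') for some constant C > 0. -/
/-!
For `c = 1 / (3 (ξ₁ + ε))` the quantity `a ρ^c` has derivative `a H ρ^c (1 - 3 c g)`, which is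
nonnegative as soon as `g < ξ₁ + ε`, i.e. on some interval `(t₋, T')` because `g → ξ₁`. Hence
`a ρ^c` is bounded there by its value at any later time, which is the quantitative bound; and
since `ρ → ∞` while `c > 0`, the bound `C ρ^{-c}` tends to zero and squeezes `a` to `0`.
-/

open Set Filter Topology

theorem monotoneOn_mul_rpow_of_hasDerivAt {a ρ H g : ℝ → ℝ} {c : ℝ} {D : Set ℝ}
    (hD : Convex ℝ D) (ha₀ : ∀ t ∈ D, 0 ≤ a t) (hρ₀ : ∀ t ∈ D, 0 < ρ t)
    (hH₀ : ∀ t ∈ D, 0 ≤ H t) (hg : ∀ t ∈ D, 3 * c * g t ≤ 1)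
    (ha : ∀ t ∈ D, HasDerivAt a (a t * H t) t)
    (hρ : ∀ t ∈ D, HasDerivAt ρ (-3 * H t * ρ t * g t) t) :
    MonotoneOn (fun t => a t * ρ t ^ c) D := by
  have hderiv : ∀ t ∈ D,
      HasDerivAt (fun t => a t * ρ t ^ c) (a t * H t * ρ t ^ c * (1 - 3 * c * g t)) t := by
    intro t ht
    have hρc : ρ t ^ (c - 1) * ρ t = ρ t ^ c := by
      rw [← Real.rpow_add_one (hρ₀ t ht).ne', sub_add_cancel]
    refine ((ha t ht).mul ((hρ t ht).rpow_const (p := c) (Or.inl (hρ₀ t ht).ne'))).congr_deriv ?_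
    linear_combination -3 * c * a t * H t * g t * hρc
  refine monotoneOn_of_deriv_nonneg hD
    (fun t ht => (hderiv t ht).continuousAt.continuousWithinAt)
    (fun t ht => (hderiv t (interior_subset ht)).differentiableAt.differentiableWithinAt)
    fun t ht => ?_
  have ht := interior_subset ht
  rw [(hderiv t ht).deriv]
  have := hρ₀ t ht
  have := ha₀ t ht
  have := hH₀ t ht
  have : 0 ≤ 1 - 3 * c * g t := sub_nonneg.2 (hg t ht)
  positivity

theorem le_mul_one_div_rpow_of_monotoneOn {a ρ : ℝ → ℝ} {c : ℝ} {D : Set ℝ}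
    (hmono : MonotoneOn (fun t => a t * ρ t ^ c) D) {t t₀ : ℝ} (ht : t ∈ D) (ht₀ : t₀ ∈ D)
    (htt₀ : t ≤ t₀) (hρt : 0 < ρ t) :
    a t ≤ a t₀ * ρ t₀ ^ c * (1 / ρ t) ^ c := by
  have hρc : 0 < ρ t ^ c := Real.rpow_pos_of_pos hρt c
  rw [one_div, Real.inv_rpow hρt.le, ← div_eq_mul_inv, le_div_iff₀ hρc]
  exact hmono ht ht₀ htt₀

theorem tendsto_one_div_rpow_nhds_zero {α : Type*} {l : Filter α} {ρ : α → ℝ} {c : ℝ}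
    (hc : 0 < c) (hρ : Tendsto ρ l atTop) : Tendsto (fun t => (1 / ρ t) ^ c) l (𝓝 0) := by
  refine ((tendsto_rpow_neg_atTop hc).comp hρ).congr' ?_
  filter_upwards [hρ.eventually_gt_atTop 0] with t ht
  rw [Function.comp_apply, Real.rpow_neg ht.le, one_div, Real.inv_rpow ht.le]

theorem scale_factor_vanishes_of_density_blowup_general (tm T : ℝ) (htm : tm < T)
    (H ρ a g : ℝ → ℝ) (ξ₁ : ℝ)
    (hHpos : ∀ t ∈ Set.Ioo tm T, 0 < H t)
    (hρpos : ∀ t ∈ Set.Ioo tm T, 0 < ρ t)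
    (hapos : ∀ t ∈ Set.Ioo tm T, 0 < a t)
    (hρ : ∀ t ∈ Set.Ioo tm T, HasDerivAt ρ (-3 * H t * ρ t * g t) t)
    (ha : ∀ t ∈ Set.Ioo tm T, HasDerivAt a (a t * H t) t)
    (hglim : Filter.Tendsto g (nhdsWithin tm (Set.Ioi tm)) (nhds ξ₁))
    (hgbdd : ∃ m M : ℝ, 0 < m ∧ ∀ t ∈ Set.Ioo tm T, m ≤ g t ∧ g t ≤ M)
    (hρblow : Filter.Tendsto ρ (nhdsWithin tm (Set.Ioi tm)) Filter.atTop) :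
    Filter.Tendsto a (nhdsWithin tm (Set.Ioi tm)) (nhds 0) ∧
    ∀ ε > (0 : ℝ), ∃ T' ∈ Set.Ioc tm T, ∃ C > (0 : ℝ),
      ∀ t ∈ Set.Ioo tm T', a t ≤ C * (1 / ρ t) ^ (1 / (3 * (ξ₁ + ε))) := by
  obtain ⟨m, M, hm, hbd⟩ := hgbdd
  have hIoo : Ioo tm T ∈ 𝓝[>] tm := Ioo_mem_nhdsGT htm
  have hξ₁ : 0 < ξ₁ :=
    hm.trans_le (ge_of_tendsto hglim (mem_of_superset hIoo fun t ht => (hbd t ht).1))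
  have hbound : ∀ ε > (0 : ℝ), ∃ T' ∈ Ioc tm T, ∃ C > (0 : ℝ),
      ∀ t ∈ Ioo tm T', a t ≤ C * (1 / ρ t) ^ (1 / (3 * (ξ₁ + ε))) := by
    intro ε hε
    obtain ⟨u, hu, hgu⟩ := mem_nhdsGT_iff_exists_Ioo_subset.1
      (hglim (Iio_mem_nhds (lt_add_of_pos_right ξ₁ hε)))
    have hsub : Ioo tm (min u T) ⊆ Ioo tm T := Ioo_subset_Ioo_right (min_le_right u T)
    have hmono := monotoneOn_mul_rpow_of_hasDerivAt (c := 1 / (3 * (ξ₁ + ε))) (convex_Ioo _ _)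
      (fun t ht => (hapos t (hsub ht)).le) (fun t ht => hρpos t (hsub ht))
      (fun t ht => (hHpos t (hsub ht)).le)
      (fun t ht => by
        have : g t < ξ₁ + ε := hgu (Ioo_subset_Ioo_right (min_le_left u T) ht)
        field_simp
        linarith)
      (fun t ht => ha t (hsub ht)) (fun t ht => hρ t (hsub ht))
    obtain ⟨t₀, ht₀⟩ := nonempty_Ioo.2 (lt_min hu htm)
    refine ⟨t₀, ⟨ht₀.1, (hsub ht₀).2.le⟩, a t₀ * ρ t₀ ^ (1 / (3 * (ξ₁ + ε))),
      mul_pos (hapos t₀ (hsub ht₀)) (Real.rpow_pos_of_pos (hρpos t₀ (hsub ht₀)) _), fun t ht => ?_⟩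
    have ht' : t ∈ Ioo tm (min u T) := ⟨ht.1, ht.2.trans ht₀.2⟩
    exact le_mul_one_div_rpow_of_monotoneOn hmono ht' ht₀ ht.2.le (hρpos t (hsub ht'))
  refine ⟨?_, hbound⟩
  obtain ⟨T', hT', C, -, haC⟩ := hbound ξ₁ hξ₁
  refine squeeze_zero' (mem_of_superset hIoo fun t ht => (hapos t ht).le)
    (mem_of_superset (Ioo_mem_nhdsGT hT'.1) haC) ?_
  simpa using (tendsto_one_div_rpow_nhds_zero (by positivity) hρblow).const_mul C

/-- If `ρ' = −3Hρg` with `g → ξ₁ ≠ 0` as `t → t₋⁺`, `g` bounded between positive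
constants, `a' = aH`, `H, ρ, a > 0` on `(t₋, T)`, and `ρ → ∞` as `t → t₋⁺`, then
`a → 0` as `t → t₋⁺`; more precisely, for every `ε > 0` there are `T'` and `C > 0`
with `a t ≤ C (1/ρ t)^{1/(3(ξ₁+ε))}` on `(t₋, T')`. -/
theorem scale_factor_vanishes_of_density_blowup (tm T : ℝ) (htm : tm < T)
    (H ρ a g : ℝ → ℝ) (ξ₁ : ℝ) (hξ₁ : ξ₁ ≠ 0)
    (hHpos : ∀ t ∈ Set.Ioo tm T, 0 < H t)
    (hρpos : ∀ t ∈ Set.Ioo tm T, 0 < ρ t)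
    (hapos : ∀ t ∈ Set.Ioo tm T, 0 < a t)
    (hρ : ∀ t ∈ Set.Ioo tm T, HasDerivAt ρ (-3 * H t * ρ t * g t) t)
    (ha : ∀ t ∈ Set.Ioo tm T, HasDerivAt a (a t * H t) t)
    (hglim : Filter.Tendsto g (nhdsWithin tm (Set.Ioi tm)) (nhds ξ₁))
    (hgbdd : ∃ m M : ℝ, 0 < m ∧ ∀ t ∈ Set.Ioo tm T, m ≤ g t ∧ g t ≤ M)
    (hρblow : Filter.Tendsto ρ (nhdsWithin tm (Set.Ioi tm)) Filter.atTop) :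
    Filter.Tendsto a (nhdsWithin tm (Set.Ioi tm)) (nhds 0) ∧
    ∀ ε > (0 : ℝ), ∃ T' ∈ Set.Ioc tm T, ∃ C > (0 : ℝ),
      ∀ t ∈ Set.Ioo tm T', a t ≤ C * (1 / ρ t) ^ (1 / (3 * (ξ₁ + ε))) :=
  scale_factor_vanishes_of_density_blowup_general tm T htm H ρ a g ξ₁ hHpos hρpos hapos hρ ha hglim
    hgbdd hρblow
end

section
/- Let Σ₀ ∈ (0,1) and define Σ_M = Σ₀ √(3/(2 + Σ₀²)). Then Σ₀ < Σ_M < 1, and the function ρ(Σ) = ρ₀ (1 − Σ₀²) Σ² / ((2 + Σ₀²)(Σ_M² − Σ²)), defined for Σ ∈ [0, Σ_M), is positive, satisfies ρ(Σ₀) = ρ₀, and tends to +∞ as Σ → Σ_M⁻. -/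
open Set Filter Topology Real

/-- Toy perfect-fluid model: with `S₀ ∈ (0,1)` and `Σ_M = S₀ √(3/(2+S₀²))`, one has
`S₀ < Σ_M < 1`, and `ρ(Σ) = ρ₀(1−S₀²)Σ²/((2+S₀²)(Σ_M²−Σ²))` is positive on
`(0, Σ_M)`, satisfies `ρ(S₀) = ρ₀`, and tends to `+∞` as `Σ → Σ_M⁻`. -/
theorem toy_model_limit_anisotropy (S₀ ρ₀ : ℝ) (h₀ : S₀ ∈ Set.Ioo (0 : ℝ) 1)
    (hρ₀ : 0 < ρ₀) :
    S₀ < S₀ * Real.sqrt (3 / (2 + S₀ ^ 2)) ∧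
    S₀ * Real.sqrt (3 / (2 + S₀ ^ 2)) < 1 ∧
    (∀ S : ℝ, 0 < S → S < S₀ * Real.sqrt (3 / (2 + S₀ ^ 2)) →
      0 < ρ₀ * (1 - S₀ ^ 2) * S ^ 2 /
        ((2 + S₀ ^ 2) * ((S₀ * Real.sqrt (3 / (2 + S₀ ^ 2))) ^ 2 - S ^ 2))) ∧
    ρ₀ * (1 - S₀ ^ 2) * S₀ ^ 2 /
        ((2 + S₀ ^ 2) * ((S₀ * Real.sqrt (3 / (2 + S₀ ^ 2))) ^ 2 - S₀ ^ 2)) = ρ₀ ∧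
    Filter.Tendsto
      (fun S => ρ₀ * (1 - S₀ ^ 2) * S ^ 2 /
        ((2 + S₀ ^ 2) * ((S₀ * Real.sqrt (3 / (2 + S₀ ^ 2))) ^ 2 - S ^ 2)))
      (nhdsWithin (S₀ * Real.sqrt (3 / (2 + S₀ ^ 2)))
        (Set.Ico 0 (S₀ * Real.sqrt (3 / (2 + S₀ ^ 2)))))
      Filter.atTop := by
  obtain ⟨hS0, hS1⟩ := h₀
  set M := S₀ * Real.sqrt (3 / (2 + S₀ ^ 2)) with hM
  have ha : (0 : ℝ) < 2 + S₀ ^ 2 := by positivity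
  have hsq : Real.sqrt (3 / (2 + S₀ ^ 2)) ^ 2 = 3 / (2 + S₀ ^ 2) := by
    rw [Real.sq_sqrt]; positivity
  have hM2 : M ^ 2 = 3 * S₀ ^ 2 / (2 + S₀ ^ 2) := by
    rw [hM, mul_pow, hsq]; field_simp
  have hSlt : S₀ < M := by
    have h1 : (1 : ℝ) < Real.sqrt (3 / (2 + S₀ ^ 2)) := by
      rw [show (1:ℝ) = Real.sqrt 1 by simp]
      apply Real.sqrt_lt_sqrt (by norm_num)
      rw [lt_div_iff₀ ha]; nlinarith
    nlinarith
  have hMpos : 0 < M := lt_trans hS0 hSlt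
  have hM2lt : M ^ 2 < 1 := by
    rw [hM2, div_lt_one ha]; nlinarith
  have hMlt1 : M < 1 := by nlinarith
  refine ⟨hSlt, hMlt1, ?_, ?_, ?_⟩
  · intro S hS hSM
    have hden : 0 < M ^ 2 - S ^ 2 := by nlinarith
    have : 0 < 1 - S₀ ^ 2 := by nlinarith
    positivity
  · have hden : (2 + S₀ ^ 2) * (M ^ 2 - S₀ ^ 2) = S₀ ^ 2 * (1 - S₀ ^ 2) := by
      rw [hM2]; field_simp; ring
    rw [hden]
    have h1 : 0 < 1 - S₀ ^ 2 := by nlinarith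
    field_simp
  · have hnum : Filter.Tendsto (fun S : ℝ => ρ₀ * (1 - S₀ ^ 2) * S ^ 2)
        (nhdsWithin M (Set.Ico 0 M)) (nhds (ρ₀ * (1 - S₀ ^ 2) * M ^ 2)) := by
      apply Filter.Tendsto.mono_left _ nhdsWithin_le_nhds
      exact (continuous_const.mul (continuous_pow 2)).tendsto M
    have hC : 0 < ρ₀ * (1 - S₀ ^ 2) * M ^ 2 := by
      have : 0 < 1 - S₀ ^ 2 := by nlinarith
      positivity
    have hden : Filter.Tendsto (fun S : ℝ => (2 + S₀ ^ 2) * (M ^ 2 - S ^ 2))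
        (nhdsWithin M (Set.Ico 0 M)) (nhdsWithin 0 (Set.Ioi 0)) := by
      apply tendsto_nhdsWithin_of_tendsto_nhds_of_eventually_within
      · have : Filter.Tendsto (fun S : ℝ => (2 + S₀ ^ 2) * (M ^ 2 - S ^ 2)) (nhds M)
            (nhds ((2 + S₀ ^ 2) * (M ^ 2 - M ^ 2))) :=
          (continuous_const.mul (continuous_const.sub (continuous_pow 2))).tendsto M
        simpa using this.mono_left nhdsWithin_le_nhds
      · filter_upwards [self_mem_nhdsWithin] with S hS
        have h1 : S < M := hS.2
        have h2 : 0 ≤ S := hS.1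
        have : 0 < M ^ 2 - S ^ 2 := by nlinarith
        exact mul_pos ha this
    have hinv : Filter.Tendsto (fun S : ℝ => ((2 + S₀ ^ 2) * (M ^ 2 - S ^ 2))⁻¹)
        (nhdsWithin M (Set.Ico 0 M)) Filter.atTop :=
      tendsto_inv_nhdsGT_zero.comp hden
    simp only [div_eq_mul_inv]
    exact Filter.Tendsto.pos_mul_atTop hC hnum hinv
end

section
/- Let γ, Σ be constants with 0 < Σ < 1 and γ + (2 − γ)Σ² ≠ 0, and define H(t) = 2/(3(γ + (2 − γ)Σ²) t) for t > 0. Then H solves the Raychaudhuri equation Ḣ = −(3/2) H² ((1 − Σ²)γ + 2Σ²), and ρ(t) = 3H(t)²(1 − Σ²) satisfies ρ(t)/ρ(t₀) = (t₀/t)². -/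
/-!
Writing `k = γ + (2 − γ)Σ²`, the Raychaudhuri coefficient `(1 − Σ²)γ + 2Σ²` is `k` again, and
any `H(t) = c/(a t)` obeys `Ḣ = −c/(a t²) = −(a/c) H²`; with `c = 2`, `a = 3k` this is the
Raychaudhuri equation. Since `H ∝ 1/t`, the density `ρ ∝ H²` scales like `1/t²`.
-/

theorem hasDerivAt_div_mul_id (c a : ℝ) {t : ℝ} (ht : t ≠ 0) :
    HasDerivAt (fun t => c / (a * t)) (-(a / c) * (c / (a * t)) ^ 2) t := by
  rcases eq_or_ne c 0 with rfl | hc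
  · simpa using hasDerivAt_const t (0 : ℝ)
  rcases eq_or_ne a 0 with rfl | ha
  · simpa using hasDerivAt_const t (0 : ℝ)
  have hH : (fun s => c / (a * s)) = fun s => c / a * s⁻¹ := by
    funext s
    rw [← div_div, div_eq_mul_inv]
  rw [hH]
  refine ((hasDerivAt_inv ht).const_mul (c / a)).congr_deriv ?_
  field_simp

theorem div_mul_sq_div_div_mul_sq {c a : ℝ} (hc : c ≠ 0) (ha : a ≠ 0) {t t₀ : ℝ} (ht : t ≠ 0)
    (ht₀ : t₀ ≠ 0) : (c / (a * t)) ^ 2 / (c / (a * t₀)) ^ 2 = (t₀ / t) ^ 2 := by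
  field_simp

/-- The extended Kasner Hubble rate `H(t) = 2/(3(γ+(2−γ)Σ²)t)` solves the
Raychaudhuri equation `Ḣ = −(3/2)H²((1−Σ²)γ + 2Σ²)` on `(0, ∞)`, and the
density `ρ = 3H²(1−Σ²)` satisfies `ρ(t)/ρ(t₀) = (t₀/t)²`. -/
theorem extended_kasner_hubble (γ S : ℝ) (hS : S ∈ Set.Ioo (0 : ℝ) 1)
    (hk : γ + (2 - γ) * S ^ 2 ≠ 0) :
    (∀ t ∈ Set.Ioi (0 : ℝ),
      HasDerivAt (fun t => 2 / (3 * (γ + (2 - γ) * S ^ 2) * t))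
        (-(3 / 2) * (2 / (3 * (γ + (2 - γ) * S ^ 2) * t)) ^ 2
          * ((1 - S ^ 2) * γ + 2 * S ^ 2)) t) ∧
    (∀ t ∈ Set.Ioi (0 : ℝ), ∀ t₀ ∈ Set.Ioi (0 : ℝ),
      (3 * (2 / (3 * (γ + (2 - γ) * S ^ 2) * t)) ^ 2 * (1 - S ^ 2)) /
      (3 * (2 / (3 * (γ + (2 - γ) * S ^ 2) * t₀)) ^ 2 * (1 - S ^ 2)) = (t₀ / t) ^ 2) := by
  have hS₂ : 1 - S ^ 2 ≠ 0 := by nlinarith [hS.1, hS.2]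
  refine ⟨fun t ht => ?_, fun t ht t₀ ht₀ => ?_⟩
  · exact (hasDerivAt_div_mul_id 2 _ (ne_of_gt ht)).congr_deriv (by ring)
  · rw [mul_div_mul_right _ _ hS₂, mul_div_mul_left _ _ three_ne_zero]
    exact div_mul_sq_div_div_mul_sq two_ne_zero (mul_ne_zero three_ne_zero hk)
      (ne_of_gt ht) (ne_of_gt ht₀)
end

section
/- Suppose γ = 2 and Σ, β are differentiable with dΣ/ds = −((1 − Σ²)/2)(−η cos β)/(2 + Σ η cos β) and β = φ − α where dα/ds = ((1 − Σ²)/(2Σ)) · η sin β/(2 + Σ η cos β) for some constant φ and constant η. Then the product Σ(s) sin β(s) is constant along solutions. -/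
open Real

/-! With `k = (1 - Σ²) η / (2 (2 + Σ η cos β))` the flow reads `Σ' = k cos β`, `β' = -(k / Σ) sin β`,
so `(Σ sin β)' = k cos β sin β - k cos β sin β = 0`. -/

theorem hasDerivAt_mul_sin_eq_zero {S β : ℝ → ℝ} {s k : ℝ} (hS : S s ≠ 0)
    (hS' : HasDerivAt S (k * cos (β s)) s) (hβ : HasDerivAt β (-(k / S s) * sin (β s)) s) :
    HasDerivAt (fun t => S t * sin (β t)) 0 s := by
  refine (hS'.fun_mul hβ.sin).congr_deriv ?_
  field_simp
  ring

/-- Stiff case `γ = 2` of the linear matter model: `Σ sin β` is conserved, where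
`β = φ − α`. -/
theorem stiff_case_conserved_quantity (η φ : ℝ) (S α : ℝ → ℝ)
    (hS : ∀ s, S s ∈ Set.Ioo (0 : ℝ) 1)
    (hodeS : ∀ s, HasDerivAt S
      (-((1 - (S s) ^ 2) / 2) * (-η * Real.cos (φ - α s)) /
        (2 + S s * η * Real.cos (φ - α s))) s)
    (hodeα : ∀ s, HasDerivAt α
      (((1 - (S s) ^ 2) / (2 * S s)) * (η * Real.sin (φ - α s)) /
        (2 + S s * η * Real.cos (φ - α s))) s) :
    ∀ s s' : ℝ, S s * Real.sin (φ - α s) = S s' * Real.sin (φ - α s') := by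
  have hflat : ∀ s, HasDerivAt (fun t => S t * sin (φ - α t)) 0 s := fun s =>
    hasDerivAt_mul_sin_eq_zero (β := fun t => φ - α t)
      (k := (1 - S s ^ 2) / 2 * η / (2 + S s * η * cos (φ - α s))) (hS s).1.ne'
      ((hodeS s).congr_deriv (by ring)) (((hodeα s).const_sub φ).congr_deriv (by ring))
  exact is_const_of_deriv_eq_zero (fun t => (hflat t).differentiableAt) fun t => (hflat t).deriv
end
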